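/- Let φ be a k-CNF formula over a variable set X in which no clause contains both a variable and its negation, let S = sat(φ), and let I ⊆ X be k-universal for S. Then X \ I is a hitting set for φ, i.e., every clause of φ contains a literal whose underlying variable lies in X \ I. -/
import Mathlib


/-- A literal is a pair (variable, required value); an assignment `x` satisfies a
clause (a finite set of literals, interpreted as their disjunction) if some literal
of the clause gets its required value. -/
def ClauseSat {V : Type*} (C : Finset (V × ZMod 2)) (x : V → ZMod 2) : Prop :=
  ∃ l ∈ C, x l.1 = l.2

/-- The set of satisfying assignments of a CNF formula (a finite list of clauses,
interpreted as their conjunction). -/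
def SatAssignments {V : Type*} (φ : List (Finset (V × ZMod 2))) :
    Set (V → ZMod 2) :=
  {x | ∀ C ∈ φ, ClauseSat C x}

/-- `S` shatters `I` : the projection of `S` on the coordinates in `I`
is all of `{0,1}^I`. -/
def Shatters {V : Type*} (S : Set (V → ZMod 2)) (I : Finset V) : Prop :=
  ∀ g : V → ZMod 2, ∃ x ∈ S, ∀ i ∈ I, x i = g i

/-- `I` is `k`-universal for `S` : `|I| ≥ k` and every `k`-element subset of `I`
is shattered by `S`. -/
def KUniversal {V : Type*} (k : ℕ) (S : Set (V → ZMod 2)) (I : Finset V) : Prop :=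
  k ≤ I.card ∧ ∀ J ⊆ I, J.card = k → Shatters S J

theorem stmt_12 {V : Type*} [Fintype V] [DecidableEq V] (k : ℕ)
    (φ : List (Finset (V × ZMod 2)))
    (hk : ∀ C ∈ φ, C.card ≤ k)
    (hnotaut : ∀ C ∈ φ, ∀ v : V, ¬(((v, (0 : ZMod 2)) ∈ C) ∧ ((v, (1 : ZMod 2)) ∈ C)))
    (I : Finset V) (hI : KUniversal k (SatAssignments φ) I) :
    ∀ C ∈ φ, ∃ l ∈ C, l.1 ∉ I := by
  intro C hC
  by_contra h
  push_neg at h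
  -- all variables of C lie in I
  have hsub : C.image Prod.fst ⊆ I := by
    intro v hv
    obtain ⟨l, hl, rfl⟩ := Finset.mem_image.mp hv
    exact h l hl
  have hcard : (C.image Prod.fst).card ≤ k :=
    le_trans (Finset.card_image_le) (hk C hC)
  obtain ⟨J, hJ1, hJ2, hJ3⟩ :=
    Finset.exists_subsuperset_card_eq hsub hcard hI.1
  -- falsifying partial assignment
  set g : V → ZMod 2 := fun v => if (v, (0 : ZMod 2)) ∈ C then 1 else 0 with hg
  obtain ⟨x, hxS, hxg⟩ := hI.2 J hJ2 hJ3 g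
  obtain ⟨l, hl, hxl⟩ := hxS C hC
  have hvJ : l.1 ∈ J := hJ1 (Finset.mem_image.mpr ⟨l, hl, rfl⟩)
  have hxv : x l.1 = g l.1 := hxg l.1 hvJ
  obtain ⟨v, b⟩ := l
  fin_cases b <;> rw [hxl] at hxv <;> simp only at hl hxv
  · have hl0 : (v, (0 : ZMod 2)) ∈ C := hl
    have hxv' : (0 : ZMod 2) = g v := hxv
    simp [hg, hl0] at hxv'
  · have hl1 : (v, (1 : ZMod 2)) ∈ C := hl
    have h0 : (v, (0 : ZMod 2)) ∉ C := fun hmem => hnotaut C hC v ⟨hmem, hl1⟩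
    have hxv' : (1 : ZMod 2) = g v := hxv
    simp [hg, h0] at hxv'
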